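/- Let I ⊆ S be a nonzero saturated Borel ideal and ≺ a term order. If I is a segment ideal w.r.t. ≺ then I is a hilb-segment ideal w.r.t. ≺; if I is a hilb-segment ideal w.r.t. ≺ then I is a reg-segment ideal w.r.t. ≺; and if I is a reg-segment ideal w.r.t. ≺ then I is a gen-segment ideal w.r.t. ≺. -/

import Mathlib

/-!
The first implication is trivial. The other two rest on pushing segments down: for a saturated
ideal, `σ ∈ I_t` as soon as `σ x_i ∈ I_{t+1}` for every `i`, and multiplying by `x_i` respects a
term order, so a segment in degree `t + 1` gives one in degree `t`. Since every non-generator in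
`I_s` lies in the ideal generated in degrees `< s`, segments in the degrees of the minimal
generators give a gen-segment ideal. What is left is Gotzmann's bound `δ ≤ r` for saturated Borel
ideals.

That bound is proved by induction on the number of variables, strengthened by the equality of
Hilbert function and Gotzmann polynomial from degree `r` on and by a lower bound in all degrees.
The section `J = I ∩ K[x_1, …, x_n]` has as Hilbert function the first difference of that of `I`,
and its saturation `J'` by `x_1` falls under the induction hypothesis with Gotzmann number
`m = #{i | a_i > 0}`. Since `J'` is generated in degrees `≤ m`, the number `c(u)` of terms of
`J'_u ∖ J_u` cannot vanish in a degree `u ≥ m` and then reappear. Comparing Hilbert polynomials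
shows `∑ c ≤ r - m`, so `J` and `J'` agree from degree `r` on and `J`, hence `I`, is generated in
degrees `≤ r`.
-/

open Polynomial

/-- Exponent vectors of monomials (terms) of `S = K[x_0, …, x_n]`. -/
abbrev Expo (n : ℕ) := Fin (n + 1) → ℕ

/-- The degree of a term. -/
def deg {n : ℕ} (α : Expo n) : ℕ := ∑ i, α i

/-- The exponent vector of the variable `x_i`. -/
def sing {n : ℕ} (i : Fin (n + 1)) : Expo n := Pi.single i 1

/-- `MoveDown α β` : the term `α` is obtained from `β` by an elementary move `e_j^-`,
i.e. `α = x_{j-1}·β/x_j` for some `j ≥ 1` with `β_j > 0`. -/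
def MoveDown {n : ℕ} (α β : Expo n) : Prop :=
  ∃ j k : Fin (n + 1), (k : ℕ) + 1 = (j : ℕ) ∧ α + sing j = β + sing k

/-- The Borel (partial) order `α <_B β` : transitive closure of elementary moves `e_j^-`. -/
def BorelLt {n : ℕ} (α β : Expo n) : Prop := Relation.TransGen MoveDown α β

/-- A Borel set: a set of terms closed upwards under the Borel order. -/
def IsBorelSet {n : ℕ} (B : Set (Expo n)) : Prop :=
  ∀ α β : Expo n, α ∈ B → MoveDown α β → β ∈ B

/-- A monomial ideal, identified with its set of terms: closed under multiplication
by arbitrary terms. -/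
def IsMonIdeal {n : ℕ} (M : Set (Expo n)) : Prop :=
  ∀ α ∈ M, ∀ γ : Expo n, α + γ ∈ M

/-- A Borel ideal: a monomial ideal which is a Borel set in every degree. -/
def IsBorelIdeal {n : ℕ} (M : Set (Expo n)) : Prop :=
  IsMonIdeal M ∧ IsBorelSet M

/-- `𝒩(M)_t` : the set of degree-`t` terms not lying in `M`. -/
def coIdeal {n : ℕ} (M : Set (Expo n)) (t : ℕ) : Set (Expo n) :=
  {α | deg α = t ∧ α ∉ M}

/-- `p` is the Hilbert polynomial of `S/M` : `|𝒩(M)_t| = p(t)` for all `t` large. -/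
def HasHilbPoly {n : ℕ} (M : Set (Expo n)) (p : Polynomial ℚ) : Prop :=
  ∃ N : ℕ, ∀ t : ℕ, N ≤ t → ((coIdeal M t).ncard : ℚ) = p.eval (t : ℚ)

/-- Saturation for monomial ideals: a term `α` with `x_i^{k_i}·α ∈ M` for suitable
powers of every variable already lies in `M`. -/
def IsSaturatedIdeal {n : ℕ} (M : Set (Expo n)) : Prop :=
  ∀ α : Expo n, (∀ i : Fin (n + 1), ∃ k : ℕ, α + k • sing i ∈ M) → α ∈ M

/-- A term order on the terms of `S`: a multiplicative (strict) total order with `1`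
as least element and `x_0 ≺ x_1 ≺ … ≺ x_n`. -/
structure TermOrder (n : ℕ) where
  lt : Expo n → Expo n → Prop
  irrefl : ∀ a : Expo n, ¬ lt a a
  trans : ∀ a b c : Expo n, lt a b → lt b c → lt a c
  total : ∀ a b : Expo n, a ≠ b → lt a b ∨ lt b a
  add_right : ∀ a b c : Expo n, lt a b → lt (a + c) (b + c)
  zero_lt : ∀ a : Expo n, a ≠ 0 → lt 0 a
  var_lt : ∀ i j : Fin (n + 1), i < j → lt (sing i) (sing j)

/-- `M ∩ 𝕋_t` is a segment w.r.t. the order `lt`. -/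
def IsSegmentAt {n : ℕ} (lt : Expo n → Expo n → Prop) (M : Set (Expo n)) (t : ℕ) : Prop :=
  ∀ τ σ : Expo n, τ ∈ M → deg τ = t → deg σ = t → lt τ σ → σ ∈ M

/-- `M` is a segment ideal w.r.t. the order `lt`. -/
def IsSegmentIdeal {n : ℕ} (lt : Expo n → Expo n → Prop) (M : Set (Expo n)) : Prop :=
  ∀ t : ℕ, IsSegmentAt lt M t

/-- `α` is a minimal monomial generator of the monomial ideal `M`. -/
def IsMinGen {n : ℕ} (M : Set (Expo n)) (α : Expo n) : Prop :=
  α ∈ M ∧ ∀ β γ : Expo n, β + γ = α → β ∈ M → γ = 0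

/-- The ideal generated by the elements of `M` of degree `≤ s - 1`. -/
def genBelow {n : ℕ} (M : Set (Expo n)) (s : ℕ) : Set (Expo n) :=
  {x | ∃ α γ : Expo n, α ∈ M ∧ deg α < s ∧ x = α + γ}

/-- `M` is a gen-segment ideal w.r.t. `lt`: for every `s` the minimal generators of
degree `s` are the greatest among the degree-`s` terms not in `⟨M_{≤ s-1}⟩`. -/
def IsGenSegment {n : ℕ} (lt : Expo n → Expo n → Prop) (M : Set (Expo n)) : Prop :=
  ∀ α : Expo n, IsMinGen M α → ∀ σ : Expo n, deg σ = deg α →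
    σ ∉ genBelow M (deg α) → ¬ IsMinGen M σ → lt σ α

/-- `δ` is the maximal degree of a minimal monomial generator of `M`. -/
def IsMaxGenDeg {n : ℕ} (M : Set (Expo n)) (δ : ℕ) : Prop :=
  (∃ α : Expo n, IsMinGen M α ∧ deg α = δ) ∧ ∀ α : Expo n, IsMinGen M α → deg α ≤ δ

/-- `p` is an admissible polynomial with Gotzmann decomposition of length `r`
(so `r` is its Gotzmann number):
`p(z) = ∑_{i=1}^{r} binom(z + a_i - (i-1), a_i)` with `a_1 ≥ … ≥ a_r ≥ 0`. -/
def IsGotzmannDecomp (p : Polynomial ℚ) (r : ℕ) : Prop :=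
  ∃ a : Fin r → ℕ, Antitone a ∧
    ∀ t : ℕ, r ≤ t →
      p.eval (t : ℚ) = ∑ i : Fin r, ((t + a i - (i : ℕ)).choose (a i) : ℚ)

/-- An admissible polynomial: one admitting a Gotzmann decomposition. -/
def IsAdmissible (p : Polynomial ℚ) : Prop := ∃ r : ℕ, IsGotzmannDecomp p r

/-- Setting `x_0 = x_1 = 1` in a term. -/
def trunc01 {n : ℕ} (α : Expo n) : Expo n := fun i => if (i : ℕ) ≤ 1 then 0 else α i

/-- The `x_1`-saturation of a monomial ideal: the ideal generated by the minimal
generators with `x_0 = x_1 = 1`. -/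
def xOneSat {n : ℕ} (M : Set (Expo n)) : Set (Expo n) :=
  {x | ∃ α γ : Expo n, IsMinGen M α ∧ x = trunc01 α + γ}

/-- The lexicographic comparison (intended for terms of equal degree):
`α ≺_lex β` iff `α_k < β_k` at the largest index `k` where they differ. -/
def LexLt {n : ℕ} (α β : Expo n) : Prop :=
  ∃ k : Fin (n + 1), α k < β k ∧ ∀ j : Fin (n + 1), k < j → α j = β j

/-- The reverse lexicographic comparison (intended for terms of equal degree):
`α ≺_revlex β` iff `α_h > β_h` at the smallest index `h` where they differ. -/
def RevLexLt {n : ℕ} (α β : Expo n) : Prop :=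
  ∃ h : Fin (n + 1), β h < α h ∧ ∀ j : Fin (n + 1), j < h → α j = β j

/-- A graded term order. -/
def IsGraded {n : ℕ} (ord : TermOrder n) : Prop :=
  ∀ α β : Expo n, deg α < deg β → ord.lt α β

/-- A reverse term order: a graded term order such that, on terms of equal degree,
a strictly larger exponent of `x_0` makes a term strictly smaller. -/
def IsReverseOrder {n : ℕ} (ord : TermOrder n) : Prop :=
  IsGraded ord ∧ ∀ α β : Expo n, deg α = deg β → β 0 < α 0 → ord.lt α β

open Finset

section Terms

variable {n : ℕ}

lemma deg_add (α β : Expo n) : deg (α + β) = deg α + deg β := by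
  simp [deg, sum_add_distrib]

lemma deg_sing (i : Fin (n + 1)) : deg (sing i) = 1 := by
  simp [deg, sing]

lemma deg_add_sing (α : Expo n) (i : Fin (n + 1)) : deg (α + sing i) = deg α + 1 := by
  rw [deg_add, deg_sing]

lemma eq_zero_of_deg_eq_zero {α : Expo n} (h : deg α = 0) : α = 0 :=
  funext fun i => sum_eq_zero_iff.mp h i (mem_univ i)

lemma sing_le_iff {α : Expo n} {i : Fin (n + 1)} : sing i ≤ α ↔ 1 ≤ α i := by
  refine ⟨fun h => by simpa [sing] using h i, fun h j => ?_⟩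
  by_cases hj : j = i
  · subst hj; simpa [sing] using h
  · simp [sing, hj]

lemma exists_sing_le_of_ne_zero {α : Expo n} (h : α ≠ 0) : ∃ i, sing i ≤ α := by
  by_contra! hc
  exact h (funext fun i => by simpa [sing_le_iff] using hc i)

lemma exists_eq_add_sing_of_deg_pos {α : Expo n} (h : 0 < deg α) :
    ∃ β i, α = β + sing i ∧ deg β + 1 = deg α := by
  obtain ⟨i, hi⟩ := exists_sing_le_of_ne_zero (α := α) fun h0 => by simp [h0, deg] at h
  refine ⟨α - sing i, i, (tsub_add_cancel_of_le hi).symm, ?_⟩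
  rw [← deg_add_sing, tsub_add_cancel_of_le hi]

lemma finite_setOf_deg_eq (t : ℕ) : {α : Expo n | deg α = t}.Finite := by
  refine (Set.finite_range fun g : Fin (n + 1) → Fin (t + 1) => fun i => (g i : ℕ)).subset ?_
  intro α hα
  refine ⟨fun i => ⟨α i, Nat.lt_succ_of_le ?_⟩, rfl⟩
  rw [← (hα : deg α = t)]
  exact single_le_sum (f := α) (fun _ _ => Nat.zero_le _) (mem_univ i)

lemma coIdeal_finite (M : Set (Expo n)) (t : ℕ) : (coIdeal M t).Finite :=
  (finite_setOf_deg_eq t).subset fun _ hα => hα.1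

noncomputable def hilbFn (M : Set (Expo n)) (t : ℕ) : ℕ := (coIdeal M t).ncard

end Terms

section MinGen

variable {n : ℕ}

lemma exists_add_of_not_isMinGen {M : Set (Expo n)} {α : Expo n} (hα : α ∈ M)
    (h : ¬ IsMinGen M α) : ∃ β γ, β + γ = α ∧ β ∈ M ∧ γ ≠ 0 := by
  by_contra! hc
  exact h ⟨hα, fun β γ hsum hβ => hc β γ hsum hβ⟩

lemma IsMonIdeal.exists_add_sing_of_not_isMinGen {M : Set (Expo n)} (hM : IsMonIdeal M)
    {α : Expo n} (hα : α ∈ M) (h : ¬ IsMinGen M α) : ∃ β ∈ M, ∃ i, α = β + sing i := by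
  obtain ⟨β, γ, rfl, hβ, hγ⟩ := exists_add_of_not_isMinGen hα h
  obtain ⟨i, hi⟩ := exists_sing_le_of_ne_zero hγ
  exact ⟨β + (γ - sing i), hM β hβ _, i, by rw [add_assoc, tsub_add_cancel_of_le hi]⟩

lemma mem_genBelow_of_not_isMinGen {M : Set (Expo n)} {α : Expo n} (hα : α ∈ M)
    (h : ¬ IsMinGen M α) : α ∈ genBelow M (deg α) := by
  obtain ⟨β, γ, rfl, hβ, hγ⟩ := exists_add_of_not_isMinGen hα h
  refine ⟨β, γ, hβ, ?_, rfl⟩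
  have : deg γ ≠ 0 := fun h0 => hγ (eq_zero_of_deg_eq_zero h0)
  rw [deg_add]
  omega

end MinGen

section Segment

variable {n : ℕ} {lt : Expo n → Expo n → Prop} {I : Set (Expo n)}

lemma IsSegmentAt.of_succ (hmon : IsMonIdeal I) (hsat : IsSaturatedIdeal I)
    (hlt : ∀ a b c, lt a b → lt (a + c) (b + c)) {t : ℕ} (h : IsSegmentAt lt I (t + 1)) :
    IsSegmentAt lt I t := by
  intro τ σ hτ hdτ hdσ hτσ
  refine hsat σ fun i => ⟨1, ?_⟩
  rw [one_nsmul]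
  exact h _ _ (hmon τ hτ (sing i)) (by rw [deg_add_sing, hdτ]) (by rw [deg_add_sing, hdσ])
    (hlt _ _ _ hτσ)

lemma IsSegmentAt.of_le (hmon : IsMonIdeal I) (hsat : IsSaturatedIdeal I)
    (hlt : ∀ a b c, lt a b → lt (a + c) (b + c)) {s t : ℕ} (hst : s ≤ t)
    (h : IsSegmentAt lt I t) : IsSegmentAt lt I s := by
  induction hst using Nat.decreasingInduction with
  | self => exact h
  | of_succ k _ ih => exact ih.of_succ hmon hsat hlt

lemma isGenSegment_of_isSegmentAt (htotal : ∀ a b, a ≠ b → lt a b ∨ lt b a)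
    (h : ∀ α, IsMinGen I α → IsSegmentAt lt I (deg α)) : IsGenSegment lt I := by
  intro α hα σ hσα hσbelow hσmin
  have hne : σ ≠ α := fun h => hσmin (h ▸ hα)
  refine (htotal σ α hne).resolve_right fun hασ => hσbelow ?_
  have hσ : σ ∈ I := h α hα α σ hα.1 rfl hσα hασ
  simpa [hσα] using mem_genBelow_of_not_isMinGen hσ hσmin

end Segment

section Borel

variable {n : ℕ}

lemma IsBorelSet.add_sing_mem_of_le {B : Set (Expo n)} (hB : IsBorelSet B) (β : Expo n)
    {j l : Fin (n + 1)} (hjl : j ≤ l) (hj : β + sing j ∈ B) : β + sing l ∈ B := by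
  obtain ⟨d, hd⟩ : ∃ d, (l : ℕ) = j + d := ⟨l - j, by omega⟩
  induction d generalizing l with
  | zero => rwa [show l = j from Fin.ext (by omega)]
  | succ d ih =>
    have hl' : (j : ℕ) + d < n + 1 := by omega
    refine hB _ _ (ih (l := ⟨j + d, hl'⟩) (Fin.mk_le_mk.mpr (by omega)) rfl) ⟨l, ⟨j + d, hl'⟩, ?_⟩
    exact ⟨by simp only; omega, by abel⟩

def IsX0Saturated (M : Set (Expo n)) : Prop := ∀ α, α + sing 0 ∈ M → α ∈ M

lemma IsSaturatedIdeal.isX0Saturated {I : Set (Expo n)} (hB : IsBorelSet I)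
    (hsat : IsSaturatedIdeal I) : IsX0Saturated I :=
  fun α h => hsat α fun i => ⟨1, by rw [one_nsmul]; exact hB.add_sing_mem_of_le α (Fin.zero_le i) h⟩

lemma IsX0Saturated.of_add_nsmul {I : Set (Expo n)} (hI : IsX0Saturated I) {α : Expo n} {k : ℕ}
    (h : α + k • sing 0 ∈ I) : α ∈ I := by
  induction k with
  | zero => simpa using h
  | succ k ih => exact ih (hI _ (by rwa [add_assoc, ← succ_nsmul]))

lemma IsX0Saturated.sub_nsmul_mem {I : Set (Expo n)} (hI : IsX0Saturated I) {α : Expo n}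
    (hα : α ∈ I) : α - α 0 • sing 0 ∈ I := by
  have hle : α 0 • sing 0 ≤ α := fun i => by
    by_cases hi : i = 0 <;> simp [sing, hi]
  exact hI.of_add_nsmul (by rwa [tsub_add_cancel_of_le hle])

lemma IsBorelIdeal.add_mem_of_add_nsmul_mem {J : Set (Expo n)} (hJ : IsBorelIdeal J)
    {β : Expo n} {k : ℕ} (hβ : β + k • sing 0 ∈ J) {γ : Expo n} (hγ : k ≤ deg γ) :
    β + γ ∈ J := by
  induction k generalizing β γ with
  | zero => simpa using hJ.1 β (by simpa using hβ) γ
  | succ k ih =>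
    obtain ⟨γ', l, rfl, hγ'⟩ := exists_eq_add_sing_of_deg_pos (by omega : 0 < deg γ)
    have h : (β + k • sing 0) + sing l ∈ J :=
      hJ.2.add_sing_mem_of_le _ (Fin.zero_le l) (by rwa [add_assoc, ← succ_nsmul])
    have := ih (β := β + sing l) (γ := γ') (by rwa [add_right_comm] at h) (by omega)
    rwa [add_assoc, add_comm (sing l)] at this

def x0Saturation (J : Set (Expo n)) : Set (Expo n) := {β | ∃ k : ℕ, β + k • sing 0 ∈ J}

lemma subset_x0Saturation (J : Set (Expo n)) : J ⊆ x0Saturation J :=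
  fun β hβ => ⟨0, by simpa using hβ⟩

lemma isBorelIdeal_x0Saturation {J : Set (Expo n)} (hJ : IsBorelIdeal J) :
    IsBorelIdeal (x0Saturation J) := by
  refine ⟨fun β ⟨k, hk⟩ γ => ⟨k, ?_⟩, fun β β' ⟨k, hk⟩ ⟨j, i, hji, heq⟩ => ⟨k, ?_⟩⟩
  · rw [add_right_comm]; exact hJ.1 _ hk γ
  · exact hJ.2 _ _ hk ⟨j, i, hji, by rw [add_right_comm, heq, add_right_comm]⟩

lemma isX0Saturated_x0Saturation (J : Set (Expo n)) : IsX0Saturated (x0Saturation J) :=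
  fun β ⟨k, hk⟩ => ⟨k + 1, by rwa [succ_nsmul, ← add_assoc, add_right_comm]⟩

/-- Dickson's lemma: an unbounded sequence of terms of `J : x₀^∞ ∖ J` would contain a divisibility
chain, whose later terms are pushed into `J` by `add_mem_of_add_nsmul_mem`. -/
lemma IsBorelIdeal.exists_mem_of_mem_x0Saturation {J : Set (Expo n)} (hJ : IsBorelIdeal J) :
    ∃ T, ∀ β ∈ x0Saturation J, T ≤ deg β → β ∈ J := by
  by_contra! hc
  choose f hfK hfdeg hfJ using hc
  obtain ⟨g, hg⟩ := (Set.isPWO_of_wellQuasiOrderedLE Set.univ).exists_monotone_subseq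
    (f := f) fun _ => Set.mem_univ _
  obtain ⟨k, hk⟩ := hfK (g 0)
  set T := deg (f (g 0)) + k
  have hle : f (g 0) ≤ f (g T) := hg (Nat.zero_le T)
  have hdeg : T ≤ deg (f (g T)) := (g.strictMono.id_le T).trans (hfdeg (g T))
  have hdiff : k ≤ deg (f (g T) - f (g 0)) := by
    have := deg_add (f (g T) - f (g 0)) (f (g 0))
    rw [tsub_add_cancel_of_le hle] at this
    omega
  have := hJ.add_mem_of_add_nsmul_mem hk hdiff
  rw [add_comm, tsub_add_cancel_of_le hle] at this
  exact hfJ (g T) this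

end Borel

section HyperplaneSection

variable {n : ℕ}

/-- `I ∩ K[x₁, …, x_{n+1}]`, with `x_{i+1}` renamed `x_i`. -/
def hyperplaneSection (I : Set (Expo (n + 1))) : Set (Expo n) := {β | Fin.cons 0 β ∈ I}

lemma cons_zero_add (β γ : Expo n) :
    (Fin.cons 0 (β + γ) : Expo (n + 1)) = Fin.cons 0 β + Fin.cons 0 γ := by
  funext i
  refine Fin.cases ?_ (fun _ => ?_) i <;> simp

lemma cons_zero_sing (i : Fin (n + 1)) : (Fin.cons 0 (sing i) : Expo (n + 1)) = sing i.succ := by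
  funext j
  refine Fin.cases ?_ (fun _ => ?_) j <;> simp [sing, Pi.single_apply]

lemma deg_cons (x : ℕ) (β : Expo n) : deg (Fin.cons x β : Expo (n + 1)) = x + deg β := by
  simp [deg, Fin.sum_cons]

lemma cons_zero_tail {α : Expo (n + 1)} (h : α 0 = 0) : Fin.cons 0 (Fin.tail α) = α := by
  rw [← h, Fin.cons_self_tail]

lemma cons_zero_injective : Function.Injective (fun β : Expo n => (Fin.cons 0 β : Expo (n + 1))) :=
  fun β γ h => funext fun i => by simpa using congrFun h i.succ

lemma isBorelIdeal_hyperplaneSection {I : Set (Expo (n + 1))} (hI : IsBorelIdeal I) :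
    IsBorelIdeal (hyperplaneSection I) := by
  refine ⟨fun β hβ γ => ?_, fun β β' hβ ⟨j, i, hji, heq⟩ => hI.2 _ _ hβ ⟨j.succ, i.succ, ?_, ?_⟩⟩
  · change Fin.cons 0 (β + γ) ∈ I
    rw [cons_zero_add]; exact hI.1 _ hβ _
  · simp [hji]
  · rw [← cons_zero_sing, ← cons_zero_sing, ← cons_zero_add, ← cons_zero_add, heq]

lemma IsX0Saturated.hyperplaneSection_nonempty {I : Set (Expo (n + 1))} (hI : IsX0Saturated I)
    (hne : I.Nonempty) : (hyperplaneSection I).Nonempty := by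
  obtain ⟨α, hα⟩ := hne
  have h0 : (α - α 0 • sing 0 : Expo (n + 1)) 0 = 0 := by simp [sing]
  refine ⟨Fin.tail (α - α 0 • sing 0), ?_⟩
  change Fin.cons 0 (Fin.tail _) ∈ I
  rw [cons_zero_tail h0]
  exact hI.sub_nsmul_mem hα

lemma mem_image_cons_coIdeal {I : Set (Expo (n + 1))} {t : ℕ} {α : Expo (n + 1)}
    (hα : α ∈ coIdeal I t) (h0 : α 0 = 0) :
    α ∈ Fin.cons 0 '' coIdeal (hyperplaneSection I) t := by
  refine ⟨Fin.tail α, ⟨?_, ?_⟩, cons_zero_tail h0⟩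
  · have := deg_cons 0 (Fin.tail α)
    rw [cons_zero_tail h0] at this
    rw [← hα.1, this, zero_add]
  · change Fin.cons 0 (Fin.tail α) ∉ I
    rw [cons_zero_tail h0]
    exact hα.2

lemma coIdeal_zero_eq_image (I : Set (Expo (n + 1))) :
    coIdeal I 0 = Fin.cons 0 '' coIdeal (hyperplaneSection I) 0 := by
  ext α
  constructor
  · intro hα
    refine mem_image_cons_coIdeal hα ?_
    rw [eq_zero_of_deg_eq_zero hα.1]
    rfl
  · rintro ⟨β, ⟨hdeg, hβ⟩, rfl⟩
    exact ⟨by rw [deg_cons, hdeg], hβ⟩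

lemma coIdeal_succ_eq_union {I : Set (Expo (n + 1))} (hmon : IsMonIdeal I) (hI : IsX0Saturated I)
    (t : ℕ) : coIdeal I (t + 1) =
      (· + sing 0) '' coIdeal I t ∪ Fin.cons 0 '' coIdeal (hyperplaneSection I) (t + 1) := by
  ext α
  constructor
  · intro hα
    by_cases h0 : α 0 = 0
    · exact Or.inr (mem_image_cons_coIdeal hα h0)
    · have hle : sing 0 ≤ α := sing_le_iff.mpr (Nat.one_le_iff_ne_zero.mpr h0)
      refine Or.inl ⟨α - sing 0, ⟨?_, fun h => hα.2 ?_⟩, tsub_add_cancel_of_le hle⟩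
      · have := deg_add_sing (α - sing 0) 0
        rw [tsub_add_cancel_of_le hle, hα.1] at this
        omega
      · simpa [tsub_add_cancel_of_le hle] using hmon _ h (sing 0)
  · rintro (⟨β, ⟨hdeg, hβ⟩, rfl⟩ | ⟨β, ⟨hdeg, hβ⟩, rfl⟩)
    · exact ⟨by rw [deg_add_sing, hdeg], fun h => hβ (hI β h)⟩
    · exact ⟨by rw [deg_cons, hdeg, zero_add], hβ⟩

lemma hilbFn_succ {I : Set (Expo (n + 1))} (hmon : IsMonIdeal I) (hI : IsX0Saturated I) (t : ℕ) :
    hilbFn I (t + 1) = hilbFn I t + hilbFn (hyperplaneSection I) (t + 1) := by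
  have hdisj : Disjoint ((· + sing 0) '' coIdeal I t)
      (Fin.cons 0 '' coIdeal (hyperplaneSection I) (t + 1)) := by
    rw [Set.disjoint_left]
    rintro _ ⟨β, -, rfl⟩ ⟨γ, -, hγ⟩
    have := congrFun hγ 0
    simp [sing] at this
  rw [hilbFn, coIdeal_succ_eq_union hmon hI, Set.ncard_union_eq hdisj
    ((coIdeal_finite _ _).image _) ((coIdeal_finite _ _).image _),
    Set.ncard_image_of_injective _ (add_left_injective _),
    Set.ncard_image_of_injective _ cons_zero_injective, hilbFn, hilbFn]

lemma hilbFn_eq_sum_hyperplaneSection {I : Set (Expo (n + 1))} (hmon : IsMonIdeal I)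
    (hI : IsX0Saturated I) (t : ℕ) :
    hilbFn I t = ∑ s ∈ range (t + 1), hilbFn (hyperplaneSection I) s := by
  induction t with
  | zero => simp [hilbFn, coIdeal_zero_eq_image, Set.ncard_image_of_injective _ cons_zero_injective]
  | succ t ih => rw [sum_range_succ, ← ih, hilbFn_succ hmon hI]

lemma IsMinGen.tail_hyperplaneSection {I : Set (Expo (n + 1))} (hI : IsX0Saturated I)
    {g : Expo (n + 1)} (hg : IsMinGen I g) : IsMinGen (hyperplaneSection I) (Fin.tail g) ∧
      deg (Fin.tail g) = deg g := by
  have hg0 : g 0 = 0 := by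
    by_contra h0
    have hle : sing 0 ≤ g := sing_le_iff.mpr (Nat.one_le_iff_ne_zero.mpr h0)
    have := congrFun (hg.2 (g - sing 0) (sing 0) (tsub_add_cancel_of_le hle)
      (hI _ (by rw [tsub_add_cancel_of_le hle]; exact hg.1))) 0
    simp [sing] at this
  refine ⟨⟨?_, fun β γ hsum hβ => ?_⟩, ?_⟩
  · change Fin.cons 0 (Fin.tail g) ∈ I
    rw [cons_zero_tail hg0]
    exact hg.1
  · have h := hg.2 _ _ (by rw [← cons_zero_add, hsum, cons_zero_tail hg0]) hβ
    exact cons_zero_injective (h.trans (cons_zero_tail rfl).symm)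
  · have := deg_cons 0 (Fin.tail g)
    rw [cons_zero_tail hg0] at this
    omega

end HyperplaneSection

section GotzmannFn

/-- `C(t - i + k, k)`, cut off to `0` for `t < i` instead of being continued as a polynomial
in `t`. -/
def shiftedChoose (k i t : ℕ) : ℕ := if i ≤ t then (t - i + k).choose k else 0

lemma shiftedChoose_succ_succ (k i t : ℕ) :
    shiftedChoose (k + 1) i (t + 1) = shiftedChoose (k + 1) i t + shiftedChoose k i (t + 1) := by
  unfold shiftedChoose
  rcases lt_trichotomy i (t + 1) with h | rfl | h
  · rw [if_pos h.le, if_pos (by omega), if_pos h.le, show t + 1 - i + (k + 1) = t - i + k + 1 + 1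
      by omega, show t + 1 - i + k = t - i + k + 1 by omega, Nat.choose_succ_succ', add_comm,
      ← add_assoc]
  · simp
  · simp [show ¬ i ≤ t + 1 by omega, show ¬ i ≤ t by omega]

lemma sum_range_shiftedChoose (k i t : ℕ) :
    ∑ s ∈ range (t + 1), shiftedChoose k i s = shiftedChoose (k + 1) i t := by
  induction t with
  | zero => by_cases hi : i = 0 <;> simp [shiftedChoose, hi]
  | succ t ih => rw [sum_range_succ, ih, shiftedChoose_succ_succ]

def gotzmannFn (b : ℕ → ℕ) (r t : ℕ) : ℕ := ∑ i ∈ range r, shiftedChoose (b i) i t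

lemma gotzmannFn_congr {b b' : ℕ → ℕ} {r : ℕ} (h : ∀ i < r, b i = b' i) (t : ℕ) :
    gotzmannFn b r t = gotzmannFn b' r t :=
  sum_congr rfl fun i hi => by rw [h i (mem_range.mp hi)]

lemma gotzmannFn_pos (b : ℕ → ℕ) {r : ℕ} (hr : 0 < r) (t : ℕ) : 0 < gotzmannFn b r t := by
  refine lt_of_lt_of_le ?_ (single_le_sum (fun _ _ => Nat.zero_le _) (mem_range.mpr hr))
  simp [shiftedChoose, Nat.choose_pos]

lemma gotzmannFn_succ {b : ℕ → ℕ} {m : ℕ} (hpos : ∀ i < m, 0 < b i) (t : ℕ) :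
    gotzmannFn b m (t + 1) = gotzmannFn b m t + gotzmannFn (fun i => b i - 1) m (t + 1) := by
  rw [gotzmannFn, gotzmannFn, gotzmannFn, ← sum_add_distrib]
  refine sum_congr rfl fun i hi => ?_
  obtain ⟨k, hk⟩ := Nat.exists_eq_add_one.mpr (hpos i (mem_range.mp hi))
  simp only [hk, Nat.add_sub_cancel, shiftedChoose_succ_succ]

lemma sum_range_gotzmannFn (b : ℕ → ℕ) (r t : ℕ) :
    ∑ s ∈ range (t + 1), gotzmannFn b r s = gotzmannFn (fun i => b i + 1) r t := by
  simp only [gotzmannFn]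
  rw [sum_comm]
  exact sum_congr rfl fun i _ => sum_range_shiftedChoose _ _ _

lemma gotzmannFn_eq_add {b : ℕ → ℕ} {m r : ℕ} (hmr : m ≤ r)
    (hzero : ∀ i, m ≤ i → i < r → b i = 0) (t : ℕ) :
    gotzmannFn b r t = gotzmannFn b m t + (min r (t + 1) - m) := by
  rw [gotzmannFn, ← sum_range_add_sum_Ico _ hmr, gotzmannFn]
  congr 1
  have : ∀ i ∈ Ico m r, shiftedChoose (b i) i t = if i ≤ t then 1 else 0 := fun i hi => by
    rw [hzero i (mem_Ico.mp hi).1 (mem_Ico.mp hi).2]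
    simp [shiftedChoose]
  rw [sum_congr rfl this, sum_boole, Nat.cast_id,
    show {i ∈ Ico m r | i ≤ t} = Ico m (min r (t + 1)) by ext; simp; omega, Nat.card_Ico]

lemma gotzmannFn_succ_of_le {b : ℕ → ℕ} {m r : ℕ} (hmr : m ≤ r) (hpos : ∀ i < m, 0 < b i)
    (hzero : ∀ i, m ≤ i → i < r → b i = 0) {t : ℕ} (ht : r ≤ t) :
    gotzmannFn b r (t + 1) = gotzmannFn b r t + gotzmannFn (fun i => b i - 1) m (t + 1) := by
  rw [gotzmannFn_eq_add hmr hzero, gotzmannFn_eq_add hmr hzero, gotzmannFn_succ hpos,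
    min_eq_left (by omega : r ≤ t + 1 + 1), min_eq_left (by omega : r ≤ t + 1)]
  ring

lemma gotzmannFn_eq_sum_choose (b : ℕ → ℕ) {r t : ℕ} (ht : r ≤ t + 1) :
    gotzmannFn b r t = ∑ i ∈ range r, (t + b i - i).choose (b i) :=
  sum_congr rfl fun i hi => by
    rw [shiftedChoose, if_pos (by have := mem_range.mp hi; omega),
      show t - i + b i = t + b i - i by have := mem_range.mp hi; omega]

lemma Antitone.exists_pos_zero_split {b : ℕ → ℕ} (hb : Antitone b) (r : ℕ) :
    ∃ m ≤ r, (∀ i < m, 0 < b i) ∧ ∀ i, m ≤ i → i < r → b i = 0 := by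
  induction r with
  | zero => exact ⟨0, le_rfl, by simp, by simp⟩
  | succ r ih =>
    obtain ⟨m, hmr, hpos, hzero⟩ := ih
    by_cases h : m = r ∧ 0 < b r
    · refine ⟨m + 1, by omega, fun i hi => ?_, fun i hi hir => by omega⟩
      rcases Nat.lt_succ_iff_lt_or_eq.mp hi with hi | rfl
      exacts [hpos i hi, h.1 ▸ h.2]
    · refine ⟨m, by omega, hpos, fun i hmi hir => ?_⟩
      rcases Nat.lt_succ_iff_lt_or_eq.mp hir with hir | rfl
      · exact hzero i hmi hir
      · rcases hmi.eq_or_lt with rfl | hlt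
        · omega
        · exact Nat.eq_zero_of_le_zero ((hb hlt.le).trans (hzero m le_rfl hlt).le)

end GotzmannFn

section Core

lemma gotzmannFn_le_sum_range {b : ℕ → ℕ} {m : ℕ} (hpos : ∀ i < m, 0 < b i) {h : ℕ → ℕ}
    (hle : ∀ s, gotzmannFn (fun i => b i - 1) m s ≤ h s) (t : ℕ) :
    gotzmannFn b m t ≤ ∑ s ∈ range (t + 1), h s := by
  rw [gotzmannFn_congr (b' := fun i => b i - 1 + 1) (fun i hi => by have := hpos i hi; omega),
    ← sum_range_gotzmannFn]
  exact sum_le_sum fun s _ => hle s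

lemma exists_sum_range_eq_gotzmannFn_add {b : ℕ → ℕ} {m : ℕ} (hpos : ∀ i < m, 0 < b i)
    {h : ℕ → ℕ} (heq : ∀ s, m ≤ s → h s = gotzmannFn (fun i => b i - 1) m s)
    (hle : ∀ s, gotzmannFn (fun i => b i - 1) m s ≤ h s) :
    ∃ E, ∀ t, m ≤ t → ∑ s ∈ range (t + 1), h s = gotzmannFn b m t + E := by
  obtain ⟨E, hE⟩ := Nat.exists_eq_add_of_le (gotzmannFn_le_sum_range hpos hle m)
  refine ⟨E, fun t ht => ?_⟩
  induction t, ht using Nat.le_induction with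
  | base => exact hE
  | succ t ht ih => rw [sum_range_succ, ih, heq (t + 1) (by omega), gotzmannFn_succ hpos]; ring

lemma pos_of_pos_of_le {c : ℕ → ℕ} {m : ℕ} (hprop : ∀ u, m ≤ u → 0 < c (u + 1) → 0 < c u)
    {u v : ℕ} (hmu : m ≤ u) (huv : u ≤ v) (hv : 0 < c v) : 0 < c u := by
  induction v, huv using Nat.le_induction with
  | base => exact hv
  | succ v huv ih => exact ih (hprop v (hmu.trans huv) hv)

lemma min_le_sum_range_of_pos_of_pos {c : ℕ → ℕ} {m T : ℕ} (hT : ∀ s ≥ T, c s = 0)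
    (hprop : ∀ u, m ≤ u → 0 < c (u + 1) → 0 < c u) (s : ℕ) :
    min (∑ u ∈ range T, c u) (s - m) ≤ ∑ u ∈ range s, c u := by
  by_cases h : ∃ v, s ≤ v ∧ 0 < c v
  · obtain ⟨v, hsv, hv⟩ := h
    refine min_le_of_right_le ?_
    calc s - m = #(Ico m s) • 1 := by simp
      _ ≤ ∑ u ∈ Ico m s, c u := card_nsmul_le_sum _ _ _ fun u hu =>
          pos_of_pos_of_le hprop (mem_Ico.mp hu).1 (by have := (mem_Ico.mp hu).2; omega) hv
      _ ≤ ∑ u ∈ range s, c u :=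
          sum_le_sum_of_subset fun u hu => mem_range.mpr (mem_Ico.mp hu).2
  · push Not at h
    refine min_le_of_left_le (le_of_eq ?_)
    rw [← eventually_constant_sum hT (le_max_left T s),
      eventually_constant_sum (fun u hu => Nat.le_zero.mp (h u hu)) (le_max_right T s)]

/-- In the induction step `h` is the Hilbert function of the saturated section, `c` counts the
gap between section and saturation, and `∑_{s ≤ t} (h s + c s)` is the Hilbert function of the
ideal. Comparing with the Gotzmann polynomial gives `E + ∑ c = r - m`, which a gap in a degree
`≥ r` would exceed, since it propagates downwards to degree `m`. -/
lemma gotzmann_step {b : ℕ → ℕ} {m r : ℕ} (hmr : m ≤ r) (hpos : ∀ i < m, 0 < b i)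
    (hzero : ∀ i, m ≤ i → i < r → b i = 0) {h c : ℕ → ℕ} {T N : ℕ}
    (heq : ∀ s, m ≤ s → h s = gotzmannFn (fun i => b i - 1) m s)
    (hle : ∀ s, gotzmannFn (fun i => b i - 1) m s ≤ h s) (hT : ∀ s ≥ T, c s = 0)
    (hprop : ∀ u, m ≤ u → 0 < c (u + 1) → 0 < c u)
    (hev : ∀ t, N ≤ t → ∑ s ∈ range (t + 1), (h s + c s) = gotzmannFn b r t) :
    (∀ s, r ≤ s → c s = 0) ∧
      (∀ t, r ≤ t → ∑ s ∈ range (t + 1), (h s + c s) = gotzmannFn b r t) ∧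
      ∀ t, gotzmannFn b r t ≤ ∑ s ∈ range (t + 1), (h s + c s) := by
  obtain ⟨E, hE⟩ := exists_sum_range_eq_gotzmannFn_add hpos heq hle
  set cT := ∑ u ∈ range T, c u
  have hle_cT : ∀ t, ∑ u ∈ range t, c u ≤ cT := fun t =>
    (sum_le_sum_of_subset (range_subset_range.mpr (le_max_left t T))).trans
      (eventually_constant_sum hT (le_max_right t T)).le
  have hbudget : E + cT = r - m := by
    have := hev (N + T + r) (by omega)
    rw [sum_add_distrib, hE _ (by omega), eventually_constant_sum hT (by omega : T ≤ N + T + r + 1),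
      gotzmannFn_eq_add hmr hzero, min_eq_left (by omega)] at this
    omega
  have hgap := min_le_sum_range_of_pos_of_pos hT hprop
  have hvanish : ∀ s, r ≤ s → c s = 0 := fun s hs => by
    have := hle_cT (s + 1)
    rw [sum_range_succ] at this
    have := hgap s
    omega
  refine ⟨hvanish, fun t ht => ?_, fun t => ?_⟩
  · have hct : ∑ u ∈ range (t + 1), c u = cT := by
      rw [eventually_constant_sum hvanish (by omega : r ≤ t + 1),
        ← eventually_constant_sum hvanish (le_max_right T r),
        eventually_constant_sum hT (le_max_left T r)]
    rw [sum_add_distrib, hE t (by omega), hct, gotzmannFn_eq_add hmr hzero, min_eq_left (by omega)]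
    omega
  · rw [sum_add_distrib, gotzmannFn_eq_add hmr hzero]
    have := gotzmannFn_le_sum_range hpos hle t
    have := hgap (t + 1)
    rcases le_or_gt m t with hmt | hmt
    · have := hE t hmt
      omega
    · omega

end Core

section Gap

variable {n : ℕ} {J K : Set (Expo n)}

lemma mem_coIdeal_sdiff {s : ℕ} {β : Expo n} :
    β ∈ coIdeal J s \ coIdeal K s ↔ deg β = s ∧ β ∉ J ∧ β ∈ K := by
  simp only [coIdeal, Set.mem_sdiff, Set.mem_ofPred_eq, not_and, not_not]
  tauto

lemma hilbFn_eq_add_ncard_sdiff (hJK : J ⊆ K) (s : ℕ) :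
    hilbFn J s = hilbFn K s + (coIdeal J s \ coIdeal K s).ncard := by
  have hsub : coIdeal K s ⊆ coIdeal J s := fun _ hβ => ⟨hβ.1, fun h => hβ.2 (hJK h)⟩
  rw [add_comm, hilbFn, hilbFn, Set.ncard_sdiff_add_ncard_of_subset hsub (coIdeal_finite J s)]

lemma ncard_coIdeal_sdiff_eq_zero_iff {s : ℕ} :
    (coIdeal J s \ coIdeal K s).ncard = 0 ↔ ∀ β ∈ K, deg β = s → β ∈ J := by
  rw [Set.ncard_eq_zero (coIdeal_finite J s).sdiff, Set.eq_empty_iff_forall_notMem]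
  simp only [mem_coIdeal_sdiff]
  grind

lemma ncard_coIdeal_sdiff_pos_of_succ (hJ : IsMonIdeal J) (hK : IsMonIdeal K) {m u : ℕ}
    (hgen : ∀ g, IsMinGen K g → deg g ≤ m) (hmu : m ≤ u)
    (h : 0 < (coIdeal J (u + 1) \ coIdeal K (u + 1)).ncard) :
    0 < (coIdeal J u \ coIdeal K u).ncard := by
  obtain ⟨β, hβ⟩ := Set.nonempty_of_ncard_ne_zero h.ne'
  obtain ⟨hdeg, hβJ, hβK⟩ := mem_coIdeal_sdiff.mp hβ
  obtain ⟨β', hβ'K, i, rfl⟩ :=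
    hK.exists_add_sing_of_not_isMinGen hβK fun hmin => by have := hgen _ hmin; omega
  refine (Set.ncard_pos ((coIdeal_finite J u).sdiff)).mpr ⟨β', mem_coIdeal_sdiff.mpr ⟨?_, ?_, hβ'K⟩⟩
  · rw [deg_add_sing] at hdeg; omega
  · exact fun hβ'J => hβJ (hJ β' hβ'J (sing i))

lemma deg_le_of_isMinGen_of_subset (hJK : J ⊆ K) (hK : IsMonIdeal K) {r : ℕ}
    (hgen : ∀ g, IsMinGen K g → deg g ≤ r) (hgap : ∀ β ∈ K, r ≤ deg β → β ∈ J) {g : Expo n}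
    (hg : IsMinGen J g) : deg g ≤ r := by
  by_contra! hdeg
  obtain ⟨β, hβK, i, rfl⟩ :=
    hK.exists_add_sing_of_not_isMinGen (hJK hg.1) fun hmin => by have := hgen _ hmin; omega
  rw [deg_add_sing] at hdeg
  have := congrFun (hg.2 β (sing i) rfl (hgap β hβK (by omega))) i
  simp [sing] at this

end Gap

section Master

variable {n : ℕ}

/-- `hilbFn_eq` and the Macaulay-type lower bound `le_hilbFn` strengthen the regularity bound
`deg_le` enough to survive the induction on the number of variables. -/
structure GotzmannBound (M : Set (Expo n)) (b : ℕ → ℕ) (r : ℕ) : Prop where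
  deg_le : ∀ g, IsMinGen M g → deg g ≤ r
  hilbFn_eq : ∀ t, r ≤ t → hilbFn M t = gotzmannFn b r t
  le_hilbFn : ∀ t, gotzmannFn b r t ≤ hilbFn M t

lemma gotzmannBound_zero {I : Set (Expo 0)} (hmon : IsMonIdeal I) (hne : I.Nonempty)
    (hI0 : IsX0Saturated I) {b : ℕ → ℕ} {r : ℕ}
    (hev : ∃ N, ∀ t, N ≤ t → hilbFn I t = gotzmannFn b r t) : GotzmannBound I b r := by
  obtain ⟨α, hα⟩ := hne
  have h0 : (0 : Expo 0) ∈ I := by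
    convert hI0.sub_nsmul_mem hα using 1
    funext i
    simp [Fin.fin_one_eq_zero i, sing]
  have hzero : ∀ t, hilbFn I t = 0 := fun t => by
    simp [hilbFn, coIdeal, fun β => by simpa using hmon 0 h0 β]
  obtain ⟨N, hN⟩ := hev
  obtain rfl : r = 0 := by
    by_contra hr
    have := gotzmannFn_pos b (Nat.pos_of_ne_zero hr) N
    rw [← hN N le_rfl, hzero] at this
    exact this.false
  refine ⟨fun g hg => ?_, fun t _ => by simp [hzero, gotzmannFn], fun t => by simp [gotzmannFn]⟩
  rw [hg.2 0 g (zero_add g) h0]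
  simp [deg]

lemma gotzmannBound_succ {I : Set (Expo (n + 1))} (hI : IsBorelIdeal I) (hne : I.Nonempty)
    (hI0 : IsX0Saturated I) {b : ℕ → ℕ} {r : ℕ} (hb : Antitone b)
    (hev : ∃ N, ∀ t, N ≤ t → hilbFn I t = gotzmannFn b r t)
    (ih : ∀ {K : Set (Expo n)}, IsBorelIdeal K → K.Nonempty → IsX0Saturated K →
      ∀ {b' : ℕ → ℕ} {m : ℕ}, Antitone b' →
        (∃ N, ∀ t, N ≤ t → hilbFn K t = gotzmannFn b' m t) → GotzmannBound K b' m) :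
    GotzmannBound I b r := by
  set J := hyperplaneSection I
  set K := x0Saturation J
  set c : ℕ → ℕ := fun s => (coIdeal J s \ coIdeal K s).ncard
  have hJ : IsBorelIdeal J := isBorelIdeal_hyperplaneSection hI
  have hK : IsBorelIdeal K := isBorelIdeal_x0Saturation hJ
  have hJK : J ⊆ K := subset_x0Saturation J
  obtain ⟨m, hmr, hpos, hzero⟩ := hb.exists_pos_zero_split r
  obtain ⟨T, hT⟩ := hJ.exists_mem_of_mem_x0Saturation
  have hcT : ∀ s ≥ T, c s = 0 := fun s hs =>
    ncard_coIdeal_sdiff_eq_zero_iff.mpr fun β hβ hdeg => hT β hβ (hdeg ▸ hs)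
  have hsum : ∀ t, hilbFn I t = ∑ s ∈ range (t + 1), (hilbFn K s + c s) := fun t => by
    rw [hilbFn_eq_sum_hyperplaneSection hI.1 hI0]
    exact sum_congr rfl fun s _ => hilbFn_eq_add_ncard_sdiff hJK s
  obtain ⟨N, hN⟩ := hev
  have hKev : ∀ s, N + T + r + 1 ≤ s → hilbFn K s = gotzmannFn (fun i => b i - 1) m s := by
    intro s hs
    obtain ⟨t, rfl⟩ : ∃ t, s = t + 1 := ⟨s - 1, by omega⟩
    have := hilbFn_succ hI.1 hI0 t
    have hc : (coIdeal J (t + 1) \ coIdeal K (t + 1)).ncard = 0 := hcT _ (by omega)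
    rw [hN _ (by omega), hN _ (by omega), gotzmannFn_succ_of_le hmr hpos hzero (by omega),
      hilbFn_eq_add_ncard_sdiff hJK, hc] at this
    omega
  have hKbound := ih hK ((hI0.hyperplaneSection_nonempty hne).mono hJK)
    (isX0Saturated_x0Saturation J) (fun i j hij => Nat.sub_le_sub_right (hb hij) 1) ⟨_, hKev⟩
  obtain ⟨hvanish, heq, hle⟩ := gotzmann_step hmr hpos hzero hKbound.hilbFn_eq hKbound.le_hilbFn
    hcT (fun u hu => ncard_coIdeal_sdiff_pos_of_succ hJ.1 hK.1 hKbound.deg_le hu)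
    fun t ht => (hsum t).symm.trans (hN t ht)
  refine ⟨fun g hg => ?_, fun t ht => (hsum t).trans (heq t ht), fun t => (hle t).trans (hsum t).ge⟩
  obtain ⟨hgJ, hdeg⟩ := hg.tail_hyperplaneSection hI0
  rw [← hdeg]
  exact deg_le_of_isMinGen_of_subset hJK hK.1 (fun g' hg' => (hKbound.deg_le g' hg').trans hmr)
    (fun β hβ hdegβ => ncard_coIdeal_sdiff_eq_zero_iff.mp (hvanish _ hdegβ) β hβ rfl) hgJ

theorem gotzmannBound : ∀ {n : ℕ} {I : Set (Expo n)}, IsBorelIdeal I → I.Nonempty →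
    IsX0Saturated I → ∀ {b : ℕ → ℕ} {r : ℕ}, Antitone b →
      (∃ N, ∀ t, N ≤ t → hilbFn I t = gotzmannFn b r t) → GotzmannBound I b r
  | 0, _, hI, hne, hI0, _, _, _, hev => gotzmannBound_zero hI.1 hne hI0 hev
  | _ + 1, _, hI, hne, hI0, _, _, hb, hev =>
    gotzmannBound_succ hI hne hI0 hb hev fun hK hKne hK0 _ _ hb' hev' =>
      gotzmannBound hK hKne hK0 hb' hev'

end Master

/-- For a nonzero saturated Borel ideal `I` and a term order `≺`:
segment ideal ⟹ hilb-segment ideal ⟹ reg-segment ideal ⟹ gen-segment ideal,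
where `r` is the Gotzmann number of the Hilbert polynomial of `I` and `δ` is the
maximal degree of a minimal generator of `I`. -/
theorem segment_implications {n : ℕ} (I : Set (Expo n)) (hI : IsBorelIdeal I)
    (hne : I.Nonempty) (hsat : IsSaturatedIdeal I) (ord : TermOrder n)
    (p : Polynomial ℚ) (hp : HasHilbPoly I p)
    (r : ℕ) (hr : IsGotzmannDecomp p r)
    (δ : ℕ) (hδ : IsMaxGenDeg I δ) :
    (IsSegmentIdeal ord.lt I → IsSegmentAt ord.lt I r) ∧
    (IsSegmentAt ord.lt I r → IsSegmentAt ord.lt I δ) ∧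
    (IsSegmentAt ord.lt I δ → IsGenSegment ord.lt I) := by
  obtain ⟨a, ha, hpa⟩ := hr
  obtain ⟨N, hN⟩ := hp
  set b : ℕ → ℕ := fun i => if h : i < r then a ⟨i, h⟩ else 0
  have hb : Antitone b := fun i j hij => by
    simp only [b]
    split_ifs with hj hi hi
    exacts [ha (Fin.mk_le_mk.mpr hij), by omega, Nat.zero_le _, le_rfl]
  have hev : ∀ t, max N r ≤ t → hilbFn I t = gotzmannFn b r t := fun t ht => by
    have := hN t (le_of_max_le_left ht)
    rw [hpa t (le_of_max_le_right ht)] at this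
    rw [gotzmannFn_eq_sum_choose b (by omega), ← Fin.sum_univ_eq_sum_range]
    simp only [b, Fin.is_lt, dif_pos, Fin.eta]
    exact_mod_cast this
  have hδr : δ ≤ r := by
    obtain ⟨⟨g, hg, rfl⟩, -⟩ := hδ
    exact (gotzmannBound hI hne (hsat.isX0Saturated hI.2) hb ⟨_, hev⟩).deg_le g hg
  exact ⟨fun h => h r, fun h => h.of_le hI.1 hsat ord.add_right hδr,
    fun h => isGenSegment_of_isSegmentAt ord.total fun α hα =>
      h.of_le hI.1 hsat ord.add_right (hδ.2 α hα)⟩
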